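/- arXiv:2109.14036 — 2 statements merged into one kernel-verified Lean document; each statement's English description precedes it below -/
import Mathlib

section
/- Let n ≥ 2 be a natural number and let f : ℝ → ℝ be defined by f(x) = ∫_0^x (1 - t^n)^(-(n-1)/n) dt. Then for every natural number l ≥ 1, writing l = n·k + r with 0 ≤ r ≤ n-1 by the division algorithm: if r = 1 then the l-th derivative of f at 0 equals (∏_{i=0}^{k-1} ((n-1)/n + i)) · (k·n)!/k!, and if r ≠ 1 then the l-th derivative of f at 0 equals 0. -/
open Real intervalIntegral Finset

/-!
With `a = (n - 1) / n`, the binomial series gives `(1 - t ^ n) ^ (-a) = ∑ₖ a^{(k)} / k! · t ^ (n k)`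
for `|t| < 1`: a power series in `t` whose coefficients vanish off the multiples of `n`.
Since `f' = (1 - t ^ n) ^ (-a)` near `0`, `f^{(m+1)}(0)` is `m!` times the coefficient of `t ^ m`.
For `l = m + 1 = n k + r` this is nonzero only if `n ∣ l - 1`, i.e. `r = 1` because `n ≥ 2`.
-/

theorem ascPochhammer_eval_eq_prod_range {R : Type*} [CommSemiring R] (n : ℕ) (r : R) :
    (ascPochhammer R n).eval r = ∏ i ∈ range n, (r + i) := by
  induction n with
  | zero => simp
  | succ n ih => rw [ascPochhammer_succ_eval, ih, prod_range_succ]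

theorem Ring.multichoose_eq_prod_range_div {K : Type*} [Field K] [CharZero K] (r : K) (k : ℕ) :
    Ring.multichoose r k = (∏ i ∈ range k, (r + i)) / k.factorial := by
  rw [eq_div_iff (Nat.cast_ne_zero.mpr k.factorial_ne_zero), mul_comm, ← nsmul_eq_mul,
    Ring.factorial_nsmul_multichoose_eq_ascPochhammer, Polynomial.ascPochhammer_smeval_eq_eval,
    ascPochhammer_eval_eq_prod_range]

theorem Metric.eball_one_eq_ball {α : Type*} [PseudoMetricSpace α] (x : α) :
    Metric.eball x 1 = Metric.ball x 1 := by
  rw [← ENNReal.ofReal_one, Metric.eball_ofReal]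

theorem Real.hasSum_multichoose_mul_pow (a : ℝ) {y : ℝ} (hy : |y| < 1) :
    HasSum (fun k => Ring.multichoose a k * y ^ k) ((1 - y) ^ (-a)) := by
  have h := (one_div_one_sub_rpow_hasFPowerSeriesOnBall_zero a).hasSum (y := y)
    (by simpa [Metric.eball_one_eq_ball] using hy)
  simp only [FormalMultilinearSeries.ofScalars_apply_eq, smul_eq_mul, zero_add, one_div,
    ← Ring.multichoose_eq] at h
  rwa [rpow_neg (by linarith [abs_lt.1 hy])]

/-- The coefficients of `∑ₖ c k * x ^ (n * k)` as a power series in `x`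
(compare `Polynomial.coeff_expand`). -/
noncomputable def expandCoeff {R : Type*} [Zero R] (n : ℕ) (c : ℕ → R) (m : ℕ) : R :=
  if n ∣ m then c (m / n) else 0

theorem HasSum.expandCoeff {R : Type*} [Semiring R] [TopologicalSpace R] {n : ℕ} (hn : n ≠ 0)
    {c : ℕ → R} {x s : R} (h : HasSum (fun k => c k * (x ^ n) ^ k) s) :
    HasSum (fun m => expandCoeff n c m * x ^ m) s := by
  have hinj : Function.Injective (n * ·) := fun i j => Nat.eq_of_mul_eq_mul_left (by omega)
  refine (hinj.hasSum_iff fun m hm => ?_).mp (h.congr_fun fun k => ?_)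
  · have : ¬ n ∣ m := fun ⟨k, hk⟩ => hm ⟨k, hk.symm⟩
    simp [_root_.expandCoeff, this]
  · simp [_root_.expandCoeff, Nat.mul_div_cancel_left k (Nat.pos_of_ne_zero hn), pow_mul]

theorem hasFPowerSeriesOnBall_ofScalars_of_hasSum {c : ℕ → ℝ} {f : ℝ → ℝ}
    (h : ∀ x, |x| < 1 → HasSum (fun m => c m * x ^ m) (f x)) :
    HasFPowerSeriesOnBall f (FormalMultilinearSeries.ofScalars ℝ c) 0 1 where
  r_le := by
    refine ENNReal.le_of_forall_nnreal_lt fun r hr => ?_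
    have hr1 : |(r : ℝ)| < 1 := by
      rw [abs_of_nonneg r.coe_nonneg]
      exact_mod_cast hr
    refine FormalMultilinearSeries.le_radius_of_tendsto _ (l := 0) ?_
    simpa [FormalMultilinearSeries.ofScalars_norm] using
      (h _ hr1).summable.tendsto_atTop_zero.norm
  r_pos := one_pos
  hasSum hy := by
    simp only [FormalMultilinearSeries.ofScalars_apply_eq, smul_eq_mul, zero_add]
    exact h _ (by simpa [Metric.eball_one_eq_ball] using hy)

theorem HasFPowerSeriesOnBall.iteratedDeriv_eq_factorial_mul {𝕜 : Type*}
    [NontriviallyNormedField 𝕜] [CompleteSpace 𝕜] {f : 𝕜 → 𝕜} {c : ℕ → 𝕜} {x : 𝕜}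
    {r : ENNReal} (h : HasFPowerSeriesOnBall f (FormalMultilinearSeries.ofScalars 𝕜 c) x r)
    (m : ℕ) :
    iteratedDeriv m f x = m.factorial * c m := by
  simpa [iteratedDeriv_eq_iteratedFDeriv, FormalMultilinearSeries.ofScalars_apply_eq,
    nsmul_eq_mul] using (h.factorial_smul 1 m).symm

theorem iteratedDeriv_succ_integral {g : ℝ → ℝ} {a r : ℝ} (hr : 0 < r)
    (hg : ContinuousOn g (Metric.ball a r)) (m : ℕ) :
    iteratedDeriv (m + 1) (fun x => ∫ t in a..x, g t) a = iteratedDeriv m g a := by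
  have hderiv : ∀ x ∈ Metric.ball a r, HasDerivAt (fun x => ∫ t in a..x, g t) (g x) x :=
    fun x hx => integral_hasDerivAt_right
      ((hg.mono ((convex_ball a r).ordConnected.uIcc_subset
        (Metric.mem_ball_self hr) hx)).intervalIntegrable)
      (hg.stronglyMeasurableAtFilter Metric.isOpen_ball x hx)
      (hg.continuousAt (Metric.isOpen_ball.mem_nhds hx))
  rw [iteratedDeriv_succ']
  exact Filter.EventuallyEq.iteratedDeriv_eq m <| Filter.eventually_of_mem
    (Metric.ball_mem_nhds a hr) fun x hx => (hderiv x hx).deriv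

theorem hasFPowerSeriesOnBall_one_sub_pow_rpow_neg {n : ℕ} (hn : n ≠ 0) (a : ℝ) :
    HasFPowerSeriesOnBall (fun x : ℝ => (1 - x ^ n) ^ (-a))
      (.ofScalars ℝ (expandCoeff n (Ring.multichoose a))) 0 1 :=
  hasFPowerSeriesOnBall_ofScalars_of_hasSum fun x hx =>
    (Real.hasSum_multichoose_mul_pow a
      (by rw [abs_pow]; exact pow_lt_one₀ (abs_nonneg x) hx hn)).expandCoeff hn

theorem arcsinp_iteratedDeriv_general (n : ℕ) (hn : 2 ≤ n)
    (f : ℝ → ℝ)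
    (hf : f = fun x : ℝ => ∫ t in (0 : ℝ)..x, (1 - t ^ n) ^ (-(((n : ℝ) - 1) / n)))
    (l : ℕ) (k r : ℕ) (hlk : l = n * k + r) (hr : r ≤ n - 1) :
    (r = 1 →
      iteratedDeriv l f 0
        = (∏ i ∈ Finset.range k, (((n : ℝ) - 1) / n + i))
            * ((k * n).factorial : ℝ) / (k.factorial : ℝ)) ∧
    (r ≠ 1 → iteratedDeriv l f 0 = 0) := by
  set a : ℝ := ((n : ℝ) - 1) / n
  have hg := hasFPowerSeriesOnBall_one_sub_pow_rpow_neg (n := n) (by omega) a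
  have hderiv (m : ℕ) :
      iteratedDeriv (m + 1) f 0 = m.factorial * expandCoeff n (Ring.multichoose a) m := by
    rw [hf, iteratedDeriv_succ_integral one_pos
        (by simpa [Metric.eball_one_eq_ball] using hg.continuousOn),
      hg.iteratedDeriv_eq_factorial_mul]
  refine ⟨fun hr1 => ?_, fun hr1 => ?_⟩
  · subst hlk hr1
    rw [hderiv, expandCoeff, if_pos (dvd_mul_right n k), Nat.mul_div_cancel_left k (by omega),
      Ring.multichoose_eq_prod_range_div, mul_comm k n]
    ring
  · rcases l with _ | m
    · simp [hf]
    · have hnd : ¬ n ∣ m := by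
        rintro ⟨j, rfl⟩
        have hmod := congrArg (· % n) hlk
        simp only [Nat.mul_add_mod_self_left, Nat.mod_eq_of_lt (show 1 < n by omega),
          Nat.mod_eq_of_lt (show r < n by omega)] at hmod
        exact hr1 hmod.symm
      rw [hderiv, expandCoeff, if_neg hnd, mul_zero]

/-- Derivatives at `0` of `arcsin_n(x) = ∫_0^x (1-t^n)^(-(n-1)/n) dt`: writing
`l = n k + r` by the division algorithm, the `l`-th derivative at `0` is
`((n-1)/n)^{(k)} (kn)!/k!` if `r = 1`, and `0` otherwise. -/
theorem arcsinp_iteratedDeriv (n : ℕ) (hn : 2 ≤ n)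
    (f : ℝ → ℝ)
    (hf : f = fun x : ℝ => ∫ t in (0 : ℝ)..x, (1 - t ^ n) ^ (-(((n : ℝ) - 1) / n)))
    (l : ℕ) (hl : 1 ≤ l) (k r : ℕ) (hlk : l = n * k + r) (hr : r ≤ n - 1) :
    (r = 1 →
      iteratedDeriv l f 0
        = (∏ i ∈ Finset.range k, (((n : ℝ) - 1) / n + i))
            * ((k * n).factorial : ℝ) / (k.factorial : ℝ)) ∧
    (r ≠ 1 → iteratedDeriv l f 0 = 0) :=
  arcsinp_iteratedDeriv_general n hn f hf l k r hlk hr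
end

section
/- Let p ≥ 2 be a natural number and let f : ℝ → ℝ be defined by f(x) = ∫_0^x (1 - t^p)^(-(p-1)/p) dt. Then there exists a function g : ℝ → ℝ that is analytic at 0, with g(0) = 0, such that f(g(x)) = x for all x in some neighborhood of 0. (That is, the generalized sine function sin_p, which is the local inverse of arcsin_p at 0, is analytic at 0.) -/
/-!
On the unit disc the integrand extends to the holomorphic function `(1 - z ^ p) ^ (-(p-1)/p)`,
which has a holomorphic primitive there (Morera). Along the real axis the real part of that
primitive differentiates to the integrand, so `arcsin_p` agrees near `0` with a real-analytic
function; its derivative at `0` is `1`, and the analytic inverse function theorem makes the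
local inverse `sin_p` analytic.
-/

open intervalIntegral Filter Metric
open scoped Topology

theorem AnalyticAt.exists_analyticAt_localInverse {𝕜 : Type*} [NontriviallyNormedField 𝕜]
    [CompleteSpace 𝕜] [CharZero 𝕜] {f : 𝕜 → 𝕜} {x : 𝕜} (hf : AnalyticAt 𝕜 f x)
    (hf' : deriv f x ≠ 0) :
    ∃ g : 𝕜 → 𝕜, AnalyticAt 𝕜 g (f x) ∧ g (f x) = x ∧ ∀ᶠ y in 𝓝 (f x), f (g y) = y :=
  ⟨_, hf.analyticAt_localInverse hf', HasStrictFDerivAt.localInverse_apply_image ..,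
    HasStrictDerivAt.eventually_right_inverse ..⟩

theorem exists_analyticAt_hasDerivAt_of_re_eq {h : ℝ → ℝ} {H : ℂ → ℂ} {a r : ℝ} (hr : 0 < r)
    (hH : DifferentiableOn ℂ H (ball (a : ℂ) r)) (hHh : ∀ x ∈ ball a r, (H x).re = h x) :
    ∃ F : ℝ → ℝ, AnalyticAt ℝ F a ∧ ∀ x ∈ ball a r, HasDerivAt F (h x) x := by
  obtain ⟨G, hG⟩ := hH.isExactOn_ball
  have hGa : AnalyticAt ℂ G a :=
    DifferentiableOn.analyticAt (fun z hz ↦ (hG z hz).differentiableAt.differentiableWithinAt)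
      (ball_mem_nhds _ hr)
  refine ⟨fun x ↦ (G x).re, hGa.re_ofReal, fun x hx ↦ ?_⟩
  have hx' : (x : ℂ) ∈ ball (a : ℂ) r := by
    simpa [Complex.dist_eq, ← Complex.ofReal_sub, Real.dist_eq] using hx
  simpa only [hHh x hx] using (hG x hx').real_of_complex

theorem intervalIntegral_eventuallyEq_sub_of_hasDerivAt {F h : ℝ → ℝ} {a : ℝ}
    (hF : AnalyticAt ℝ F a) (hFh : ∀ᶠ x in 𝓝 a, HasDerivAt F (h x) x) :
    (fun x ↦ ∫ t in a..x, h t) =ᶠ[𝓝 a] fun x ↦ F x - F a := by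
  obtain ⟨ε, hε, hball⟩ :=
    Metric.eventually_nhds_iff_ball.1 (hFh.and hF.eventually_analyticAt)
  filter_upwards [ball_mem_nhds a hε] with x hx
  have hsub : Set.uIcc a x ⊆ ball a ε :=
    (convex_ball a ε).ordConnected.uIcc_subset (mem_ball_self hε) hx
  refine integral_eq_sub_of_hasDerivAt (fun t ht ↦ (hball t (hsub ht)).1) ?_
  refine ContinuousOn.intervalIntegrable fun t ht ↦ ContinuousAt.continuousWithinAt ?_
  have hderiv : deriv F =ᶠ[𝓝 t] h := by
    filter_upwards [isOpen_ball.mem_nhds (hsub ht)] with s hs using (hball s hs).1.deriv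
  exact ((hball t (hsub ht)).2.deriv.continuousAt).congr hderiv

theorem one_sub_pow_mem_slitPlane {p : ℕ} (hp : p ≠ 0) {z : ℂ} (hz : ‖z‖ < 1) :
    1 - z ^ p ∈ Complex.slitPlane := by
  rw [sub_eq_add_neg]
  refine Complex.mem_slitPlane_of_norm_lt_one ?_
  rw [norm_neg, norm_pow]
  exact pow_lt_one₀ (norm_nonneg z) hz hp

theorem differentiableOn_one_sub_pow_cpow {p : ℕ} (hp : p ≠ 0) (s : ℂ) :
    DifferentiableOn ℂ (fun z : ℂ ↦ (1 - z ^ p) ^ s) (ball 0 1) := fun z hz ↦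
  (DifferentiableAt.cpow_const (f := fun z : ℂ ↦ 1 - z ^ p) (by fun_prop)
    (one_sub_pow_mem_slitPlane hp (mem_ball_zero_iff.1 hz))).differentiableWithinAt

theorem re_one_sub_pow_cpow_ofReal (p : ℕ) (s : ℝ) {x : ℝ} (hx : x ∈ ball (0 : ℝ) 1) :
    ((1 - (x : ℂ) ^ p) ^ (s : ℂ)).re = (1 - x ^ p) ^ s := by
  have hx' : |x| < 1 := by simpa using hx
  have hnonneg : 0 ≤ 1 - x ^ p := by
    nlinarith [le_abs_self (x ^ p), abs_pow x p, pow_le_one₀ (abs_nonneg x) hx'.le (n := p)]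
  rw [← Complex.ofReal_pow, ← Complex.ofReal_one, ← Complex.ofReal_sub,
    ← Complex.ofReal_cpow hnonneg, Complex.ofReal_re]

/-- For an integer `p ≥ 2`, the local inverse `sin_p` at `0` of
`arcsin_p(x) = ∫_0^x (1-t^p)^(-(p-1)/p) dt` exists and is analytic at `0`. -/
theorem sinp_analyticAt (p : ℕ) (hp : 2 ≤ p)
    (f : ℝ → ℝ)
    (hf : f = fun x : ℝ => ∫ t in (0 : ℝ)..x, (1 - t ^ p) ^ (-(((p : ℝ) - 1) / p))) :
    ∃ g : ℝ → ℝ, AnalyticAt ℝ g 0 ∧ g 0 = 0 ∧ ∀ᶠ x in nhds (0 : ℝ), f (g x) = x := by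
  have hp0 : p ≠ 0 := by omega
  set s : ℝ := -(((p : ℝ) - 1) / p)
  obtain ⟨F, hFa, hFd⟩ := exists_analyticAt_hasDerivAt_of_re_eq (a := 0) one_pos
    (by simpa using differentiableOn_one_sub_pow_cpow hp0 s)
    (fun x hx ↦ re_one_sub_pow_cpow_ofReal p s hx)
  have hfF : f =ᶠ[𝓝 0] fun x ↦ F x - F 0 := hf ▸ intervalIntegral_eventuallyEq_sub_of_hasDerivAt
    hFa (eventually_of_mem (ball_mem_nhds 0 one_pos) hFd)
  have hfa : AnalyticAt ℝ f 0 := (hFa.sub analyticAt_const).congr hfF.symm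
  have hderiv : deriv f 0 = 1 := by
    rw [(((hFd 0 (mem_ball_self one_pos)).sub_const (F 0)).congr_of_eventuallyEq hfF).deriv]
    simp [zero_pow hp0]
  have hf0 : f 0 = 0 := by simp [hf]
  simpa [hf0] using hfa.exists_analyticAt_localInverse (by rw [hderiv]; exact one_ne_zero)
end
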